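/- arXiv:1803.07884 — 2 statements merged into one kernel-verified Lean document; each statement's English description precedes it below -/
import Mathlib

section
/- Reduction of modelled distributions: Let (A,T) be an abstract space with skeleton Γ and let V ∈ D^ᾱ(T;Γ). For every η with β̲ < η ≤ β̄: C_ηV ∈ D^{ᾱ∧η}(T;Γ), with ‖C_ηV‖_{T;Γ} ≤ ‖V‖_{T;Γ} and [C_ηV]_{D^{ᾱ∧η}(T;Γ)} ≤ [V]_{D^ᾱ(T;Γ)} + (|A|−1) N^{m(η)} ‖Γ‖_sk ‖V‖_{T;Γ}, where m(η) := min{⟨β⟩ : β ∈ A, β ≥ η}. Moreover, for every κ > η, every x ∈ ℝ² and every v ∈ T: |(C_κ − C_η)V(x).v| ≤ ‖V‖_{T;Γ} Σ_{β∈A, η≤β<κ} N^{⟨β⟩} ‖Γ_β(x)v‖_{T_β}, and |(id − C_η)V(x).v| ≤ ‖V‖_{T;Γ} Σ_{β∈A, β≥η} N^{⟨β⟩} ‖Γ_β(x)v‖_{T_β}. -/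
open scoped BigOperators
open MeasureTheory

noncomputable section

/-- The parabolic metric `d(x,y) = |x₁−y₁| + √|x₂−y₂|` on `ℝ²`. -/
def pdist (x y : ℝ × ℝ) : ℝ := |x.1 - y.1| + Real.sqrt |x.2 - y.2|

/-- The kernel `ψ_T`, the inverse Fourier transform of `exp(−T(k₁⁴+k₂²))`. -/
def psiK (T : ℝ) (x : ℝ × ℝ) : ℝ :=
  ∫ k : ℝ × ℝ, Real.exp (-(T * (k.1 ^ 4 + k.2 ^ 2))) *
    Real.cos (2 * Real.pi * (k.1 * x.1 + k.2 * x.2))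

/-- Mollification at scale `t` by convolution with `ψ_t`. -/
def mollify {E : Type*} [NormedAddCommGroup E] [NormedSpace ℝ E]
    (t : ℝ) (g : ℝ × ℝ → E) (x : ℝ × ℝ) : E :=
  ∫ y : ℝ × ℝ, psiK t (x - y) • g y

/-- A (vector valued) tempered distribution represented through its semigroup
mollifications `g_T`, with the semigroup property `(g_T)_t = g_{T+t}`. -/
structure MollDistrib (E : Type*) [NormedAddCommGroup E] [NormedSpace ℝ E] where
  app : ℝ → ℝ × ℝ → E
  cont : ∀ T : ℝ, 0 < T → Continuous (app T)
  semigroup : ∀ T : ℝ, 0 < T → ∀ t : ℝ, 0 < t → app (T + t) = mollify t (app T)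

/-- The data of a skeleton on the abstract space `(A, T = ⊕_{β∈A} T_β)`:
a triangular, strongly continuous family of operators. -/
structure PreSkeleton (A : Finset ℝ) (Tb : A → Type*)
    [∀ β, NormedAddCommGroup (Tb β)] [∀ β, NormedSpace ℝ (Tb β)] where
  mat : ℝ × ℝ → ∀ β γ : A, Tb γ →L[ℝ] Tb β
  cont : ∀ (β γ : A) (v : Tb γ), Continuous fun x => mat x β γ v
  diag : ∀ (x : ℝ × ℝ) (β : A), mat x β β = ContinuousLinearMap.id ℝ (Tb β)
  upper : ∀ (x : ℝ × ℝ) (β γ : A), (β : ℝ) < (γ : ℝ) → mat x β γ = 0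

namespace PreSkeleton

variable {A : Finset ℝ} {Tb : A → Type*}
  [∀ β, NormedAddCommGroup (Tb β)] [∀ β, NormedSpace ℝ (Tb β)]

/-- `Γ_β(x)v = v_β + ∑_{γ<β} Γ_β^γ(x) v_γ`. -/
def apply (S : PreSkeleton A Tb) (x : ℝ × ℝ) (β : A) (v : ∀ γ : A, Tb γ) : Tb β :=
  ∑ γ : A, S.mat x β γ (v γ)

/-- The continuity property (ssss2) of a skeleton, with constant `C`. -/
def IsSkelBound (S : PreSkeleton A Tb) (C : ℝ) : Prop :=
  ∀ (β : A) (v : ∀ γ : A, Tb γ) (x y : ℝ × ℝ), pdist y x ≤ 1 →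
    ‖S.apply y β v - S.apply x β v‖ ≤
      C * ∑ γ : A, (if (γ : ℝ) < (β : ℝ)
        then pdist y x ^ ((β : ℝ) - (γ : ℝ)) * ‖S.apply x γ v‖ else 0)

/-- `Γ` is a skeleton: the continuity property holds for some `C ≥ 0`. -/
def IsSkeleton (S : PreSkeleton A Tb) : Prop := ∃ C, 0 ≤ C ∧ S.IsSkelBound C

/-- `‖Γ‖_sk`, the least admissible constant in the continuity property. -/
def skelNorm (S : PreSkeleton A Tb) : ℝ := sInf {C | 0 ≤ C ∧ S.IsSkelBound C}

/-- Form boundedness of `V : ℝ² → T*` with constants `(M_β^b)`. -/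
def FormBounded (S : PreSkeleton A Tb) (V : ℝ × ℝ → (∀ γ : A, Tb γ) → ℝ)
    (Mb : A → ℝ) : Prop :=
  ∀ x v, |V x v| ≤ ∑ β : A, Mb β * ‖S.apply x β v‖

/-- Form continuity of order `ord` with constant `Mc`. -/
def FormContinuous (S : PreSkeleton A Tb) (ord : ℝ)
    (V : ℝ × ℝ → (∀ γ : A, Tb γ) → ℝ) (Mc : ℝ) : Prop :=
  ∀ x y v, pdist y x ≤ 1 →
    |V y v - V x v| ≤
      Mc * ∑ β : A, pdist y x ^ max (ord - (β : ℝ)) 0 * ‖S.apply x β v‖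

/-- `V` is a modelled distribution of order `ord` relative to the skeleton `S`. -/
def IsModelled (S : PreSkeleton A Tb) (ord : ℝ)
    (V : ℝ × ℝ → (∀ γ : A, Tb γ) → ℝ) : Prop :=
  (∀ x, IsLinearMap ℝ (V x)) ∧ (∀ v, Continuous fun x => V x v) ∧
    (∃ Mb : A → ℝ, (∀ β, 0 ≤ Mb β) ∧ S.FormBounded V Mb) ∧
    (∃ Mc : ℝ, 0 ≤ Mc ∧ S.FormContinuous ord V Mc)

/-- The seminorm `[V]_{D^{ord}(T;Γ)}`: least form-continuity constant. -/
def ctyNorm (S : PreSkeleton A Tb) (ord : ℝ)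
    (V : ℝ × ℝ → (∀ γ : A, Tb γ) → ℝ) : ℝ :=
  sInf {Mc | 0 ≤ Mc ∧ S.FormContinuous ord V Mc}

/-- The norm `‖V‖_{T;Γ}`: least `M` such that the constants `M·N^{⟨β⟩}` are
admissible for form boundedness. -/
def bdNorm (S : PreSkeleton A Tb) (N : ℝ) (exps : A → ℝ)
    (V : ℝ × ℝ → (∀ γ : A, Tb γ) → ℝ) : ℝ :=
  sInf {M | 0 ≤ M ∧ S.FormBounded V fun β => M * N ^ exps β}

/-- One step `(id − Γ_b)` of the reduction procedure. -/
def cutStep (S : PreSkeleton A Tb) (x : ℝ × ℝ) (b : ℝ)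
    (v : ∀ γ : A, Tb γ) : ∀ γ : A, Tb γ :=
  fun γ => v γ - if (γ : ℝ) = b then S.apply x γ v else 0

/-- The reduction of a vector: all levels `≥ η` are cut, in increasing order. -/
def cutVec (S : PreSkeleton A Tb) (x : ℝ × ℝ) (η : ℝ)
    (v : ∀ γ : A, Tb γ) : ∀ γ : A, Tb γ :=
  ((A.filter fun b => η ≤ b).sort (· ≤ ·)).foldl (fun w b => S.cutStep x b w) v

/-- The reduction `C_η V` of a modelled distribution. -/
def cutForm (S : PreSkeleton A Tb) (η : ℝ)
    (V : ℝ × ℝ → (∀ γ : A, Tb γ) → ℝ) : ℝ × ℝ → (∀ γ : A, Tb γ) → ℝ :=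
  fun x v => V x (S.cutVec x η v)

end PreSkeleton

/-- `m(η) = min{⟨β⟩ : β ∈ A, β ≥ η}`. -/
def minExpFrom (A : Finset ℝ) (exps : A → ℝ) (η : ℝ) : ℝ :=
  sInf {r | ∃ β : A, η ≤ (β : ℝ) ∧ r = exps β}
/-!
Cutting the levels `β ≥ η` of `v` at the base point `x`, in increasing order so that a later cut
does not disturb an earlier one, leaves `Γ_β(x)v` unchanged for `β < η` and kills it for `β ≥ η`.
This gives the bound on `‖C_ηV‖` and on the differences of reductions directly from form
boundedness of `V`.
For form continuity, let `w` and `w'` be the cuts of `v` at `x` and at `y` and split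
`C_ηV(y)v − C_ηV(x)v = (V(y) − V(x)).w + V(y).(w' − w)`. The first term is controlled by form
continuity of `V`, because `Γ_β(x)w = 0` for `β ≥ η`. In the second, `Γ_β(y)(w' − w)` vanishes for
`β < η`, and for `β ≥ η` it is the skeleton increment `Γ_β(x)w − Γ_β(y)w`, of size at most
`‖Γ‖_sk Σ_{γ<η} d^{η−γ} ‖Γ_γ(x)v‖`; at most `|A| − 1` levels `β ≥ η` contribute, each with weight
`N^{⟨β⟩} ≤ N^{m(η)}`. Since `d^{η−γ} → 0`, the same estimate gives continuity of `C_ηV`.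
-/

open Filter Topology

lemma pdist_nonneg (x y : ℝ × ℝ) : 0 ≤ pdist x y := by
  unfold pdist; positivity

lemma pdist_self (x : ℝ × ℝ) : pdist x x = 0 := by
  simp [pdist]

lemma continuous_pdist_left (x : ℝ × ℝ) : Continuous fun y => pdist y x := by
  unfold pdist; fun_prop

lemma le_csInf_mul {s : Set ℝ} (hs : s.Nonempty) {a c : ℝ} (hc : 0 ≤ c)
    (h : ∀ M ∈ s, a ≤ M * c) : a ≤ sInf s * c := by
  rcases hc.eq_or_lt with rfl | hc
  · simpa using h _ hs.some_mem
  · exact (div_le_iff₀ hc).1 (le_csInf hs fun M hM => (div_le_iff₀ hc).2 (h M hM))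

lemma card_filter_le_card_sub_one {A : Finset ℝ} (hA : A.Nonempty) {η : ℝ}
    (hη : A.min' hA < η) : (Finset.univ.filter fun β : A => η ≤ (β : ℝ)).card ≤ A.card - 1 := by
  have hsub : (Finset.univ.filter fun β : A => η ≤ (β : ℝ)) ⊆
      Finset.univ.erase ⟨A.min' hA, A.min'_mem hA⟩ := by
    intro β hβ
    refine Finset.mem_erase.2 ⟨fun h => ?_, Finset.mem_univ _⟩
    have : η ≤ A.min' hA := by simpa [h] using hβ
    linarith
  simpa [Finset.card_erase_of_mem] using Finset.card_le_card hsub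

lemma rpow_le_rpow_minExpFrom {A : Finset ℝ} (exps : A → ℝ) {N η : ℝ} (hN0 : 0 < N)
    (hN1 : N ≤ 1) {β : A} (hβ : η ≤ (β : ℝ)) : N ^ exps β ≤ N ^ minExpFrom A exps η := by
  have hbdd : BddBelow {r | ∃ β : A, η ≤ (β : ℝ) ∧ r = exps β} :=
    (Set.finite_range exps).bddBelow.mono <| by rintro _ ⟨β, _, rfl⟩; exact ⟨β, rfl⟩
  exact Real.rpow_le_rpow_of_exponent_ge hN0 hN1 (csInf_le hbdd ⟨β, hβ, rfl⟩)

lemma sum_ite_rpow_le {A : Finset ℝ} (hA : A.Nonempty) (exps : A → ℝ) {N η M : ℝ}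
    (hN0 : 0 < N) (hN1 : N ≤ 1) (hη : A.min' hA < η) (hM : 0 ≤ M) :
    (∑ β : A, if η ≤ (β : ℝ) then M * N ^ exps β else 0) ≤
      ((A.card - 1 : ℕ) : ℝ) * N ^ minExpFrom A exps η * M := by
  rw [← Finset.sum_filter]
  calc ∑ β ∈ Finset.univ.filter fun β : A => η ≤ (β : ℝ), M * N ^ exps β
      ≤ ∑ _β ∈ Finset.univ.filter fun β : A => η ≤ (β : ℝ), M * N ^ minExpFrom A exps η :=
        Finset.sum_le_sum fun β hβ => mul_le_mul_of_nonneg_left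
          (rpow_le_rpow_minExpFrom exps hN0 hN1 (Finset.mem_filter.1 hβ).2) hM
    _ ≤ ((A.card - 1 : ℕ) : ℝ) * (M * N ^ minExpFrom A exps η) := by
        rw [Finset.sum_const, nsmul_eq_mul]
        exact mul_le_mul_of_nonneg_right (by exact_mod_cast card_filter_le_card_sub_one hA hη)
          (mul_nonneg hM (Real.rpow_nonneg hN0.le _))
    _ = _ := by ring

namespace PreSkeleton

variable {A : Finset ℝ} {Tb : A → Type*}
  [∀ β, NormedAddCommGroup (Tb β)] [∀ β, NormedSpace ℝ (Tb β)]
  (S : PreSkeleton A Tb) {x y : ℝ × ℝ} {η : ℝ} {v w : ∀ γ : A, Tb γ}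

lemma apply_add (β : A) : S.apply x β (v + w) = S.apply x β v + S.apply x β w := by
  simp [apply, Finset.sum_add_distrib]

lemma apply_sub (β : A) : S.apply x β (v - w) = S.apply x β v - S.apply x β w := by
  simp [apply, Finset.sum_sub_distrib]

lemma apply_smul (β : A) (c : ℝ) : S.apply x β (c • v) = c • S.apply x β v := by
  simp [apply, Finset.smul_sum]

lemma apply_congr {β : A} (h : ∀ γ : A, (γ : ℝ) ≤ β → v γ = w γ) :
    S.apply x β v = S.apply x β w := by
  refine Finset.sum_congr rfl fun γ _ => ?_
  by_cases hγ : (γ : ℝ) ≤ β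
  · rw [h γ hγ]
  · simp [S.upper x β γ (lt_of_not_ge hγ)]

lemma cutStep_of_ne {b : ℝ} {γ : A} (h : (γ : ℝ) ≠ b) : S.cutStep x b v γ = v γ := by
  simp [cutStep, h]

lemma apply_cutStep_self {b : ℝ} {β : A} (hb : (β : ℝ) = b) :
    S.apply x β (S.cutStep x b v) = 0 := by
  have hcut : S.cutStep x b v = v - fun γ : A => if (γ : ℝ) = b then S.apply x γ v else 0 := rfl
  have hdiag : S.apply x β (fun γ : A => if (γ : ℝ) = b then S.apply x γ v else 0) =
      S.apply x β v := by
    rw [apply, Finset.sum_eq_single β]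
    · simp [hb, S.diag]
    · intro γ _ hγ
      have : (γ : ℝ) ≠ b := fun h => hγ (Subtype.ext (h.trans hb.symm))
      simp [this]
    · simp
  rw [hcut, S.apply_sub, hdiag, sub_self]

lemma cutStep_add (b : ℝ) : S.cutStep x b (v + w) = S.cutStep x b v + S.cutStep x b w := by
  funext γ
  simp only [cutStep, Pi.add_apply, S.apply_add]
  split_ifs <;> abel

lemma cutStep_smul (b c : ℝ) : S.cutStep x b (c • v) = c • S.cutStep x b v := by
  funext γ
  simp only [cutStep, Pi.smul_apply, S.apply_smul]
  split_ifs <;> simp [smul_sub]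

lemma foldl_cutStep_of_not_mem (l : List ℝ) {γ : A} (hγ : (γ : ℝ) ∉ l) :
    l.foldl (fun w b => S.cutStep x b w) v γ = v γ := by
  induction l generalizing v with
  | nil => rfl
  | cons b l ih =>
    rw [List.foldl_cons, ih (fun h => hγ (List.mem_cons_of_mem _ h))]
    exact S.cutStep_of_ne fun h => hγ (h ▸ List.mem_cons_self)

lemma apply_foldl_cutStep_of_mem {l : List ℝ} (hl : l.Pairwise (· < ·)) {β : A}
    (hβ : (β : ℝ) ∈ l) : S.apply x β (l.foldl (fun w b => S.cutStep x b w) v) = 0 := by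
  induction l generalizing v with
  | nil => simp at hβ
  | cons b l ih =>
    obtain ⟨hb, hl⟩ := List.pairwise_cons.1 hl
    rw [List.foldl_cons]
    rcases List.mem_cons.1 hβ with hβ | hβ
    · -- the later cuts only touch levels above `b = β`, which `Γ_β` does not see
      rw [← S.apply_cutStep_self (x := x) (v := v) hβ]
      exact S.apply_congr fun γ hγ =>
        S.foldl_cutStep_of_not_mem l fun h => by linarith [hb _ h]
    · exact ih hl hβ

lemma cutVec_of_lt {γ : A} (h : (γ : ℝ) < η) : S.cutVec x η v γ = v γ :=
  S.foldl_cutStep_of_not_mem _ fun hmem => by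
    linarith [(Finset.mem_filter.1 ((Finset.mem_sort _).1 hmem)).2]

lemma apply_cutVec_of_lt {β : A} (h : (β : ℝ) < η) :
    S.apply y β (S.cutVec x η v) = S.apply y β v :=
  S.apply_congr fun _ hγ => S.cutVec_of_lt (hγ.trans_lt h)

lemma apply_cutVec_of_le {β : A} (h : η ≤ (β : ℝ)) : S.apply x β (S.cutVec x η v) = 0 :=
  S.apply_foldl_cutStep_of_mem (Finset.sortedLT_sort _).pairwise
    ((Finset.mem_sort _).2 (Finset.mem_filter.2 ⟨β.2, h⟩))

lemma apply_cutVec (β : A) :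
    S.apply x β (S.cutVec x η v) = if (β : ℝ) < η then S.apply x β v else 0 := by
  split_ifs with h
  · exact S.apply_cutVec_of_lt h
  · exact S.apply_cutVec_of_le (le_of_not_gt h)

lemma norm_apply_cutVec_le (β : A) : ‖S.apply x β (S.cutVec x η v)‖ ≤ ‖S.apply x β v‖ := by
  rw [S.apply_cutVec]
  split_ifs <;> simp

lemma apply_cutVec_sub_cutVec {κ : ℝ} (hκ : η < κ) (β : A) :
    S.apply x β (S.cutVec x κ v - S.cutVec x η v) =
      if η ≤ (β : ℝ) ∧ (β : ℝ) < κ then S.apply x β v else 0 := by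
  rw [S.apply_sub, S.apply_cutVec, S.apply_cutVec]
  split_ifs <;> grind

lemma apply_sub_cutVec (β : A) :
    S.apply x β (v - S.cutVec x η v) = if η ≤ (β : ℝ) then S.apply x β v else 0 := by
  rw [S.apply_sub, S.apply_cutVec]
  split_ifs <;> grind

lemma cutVec_add : S.cutVec x η (v + w) = S.cutVec x η v + S.cutVec x η w := by
  unfold cutVec
  generalize (A.filter fun b => η ≤ b).sort (· ≤ ·) = l
  induction l generalizing v w with
  | nil => rfl
  | cons b l ih => simp only [List.foldl_cons, S.cutStep_add, ih]

lemma cutVec_smul (c : ℝ) : S.cutVec x η (c • v) = c • S.cutVec x η v := by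
  unfold cutVec
  generalize (A.filter fun b => η ≤ b).sort (· ≤ ·) = l
  induction l generalizing v with
  | nil => rfl
  | cons b l ih => simp only [List.foldl_cons, S.cutStep_smul, ih]

variable {V : ℝ × ℝ → (∀ γ : A, Tb γ) → ℝ}

lemma isLinearMap_cutForm (hV : ∀ x, IsLinearMap ℝ (V x)) (x : ℝ × ℝ) :
    IsLinearMap ℝ (S.cutForm η V x) where
  map_add u w := by simp only [cutForm, S.cutVec_add, (hV x).map_add]
  map_smul c u := by simp only [cutForm, S.cutVec_smul, (hV x).map_smul]

lemma formBounded_cutForm {Mb : A → ℝ} (hMb : ∀ β, 0 ≤ Mb β) (hV : S.FormBounded V Mb) :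
    S.FormBounded (S.cutForm η V) Mb := fun x _ =>
  (hV x _).trans <| Finset.sum_le_sum fun β _ =>
    mul_le_mul_of_nonneg_left (S.norm_apply_cutVec_le β) (hMb β)

lemma abs_le_of_apply_eq_ite {Mb : A → ℝ} (hV : S.FormBounded V Mb) {p : A → Prop}
    [DecidablePred p] (hw : ∀ β, S.apply x β w = if p β then S.apply x β v else 0) :
    |V x w| ≤ ∑ β : A, if p β then Mb β * ‖S.apply x β v‖ else 0 :=
  (hV x w).trans_eq <| Finset.sum_congr rfl fun β _ => by
    rw [hw]; split_ifs <;> simp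

lemma FormContinuous.mono {S : PreSkeleton A Tb} {ord Mc Mc' : ℝ}
    (hV : S.FormContinuous ord V Mc) (h : Mc ≤ Mc') :
    S.FormContinuous ord V Mc' := fun x y v hd =>
  (hV x y v hd).trans <| mul_le_mul_of_nonneg_right h <| Finset.sum_nonneg fun _ _ =>
    mul_nonneg (Real.rpow_nonneg (pdist_nonneg _ _) _) (norm_nonneg _)

lemma skelNorm_spec (hS : S.IsSkeleton) : 0 ≤ S.skelNorm ∧ S.IsSkelBound S.skelNorm := by
  obtain ⟨C, hC⟩ := hS
  refine ⟨le_csInf ⟨C, hC⟩ fun _ h => h.1, fun β v x y hd => ?_⟩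
  refine le_csInf_mul ⟨C, hC⟩ (Finset.sum_nonneg fun γ _ => ?_) fun C' hC' => hC'.2 β v x y hd
  split_ifs
  · exact mul_nonneg (Real.rpow_nonneg (pdist_nonneg _ _) _) (norm_nonneg _)
  · exact le_rfl

lemma ctyNorm_spec {ord : ℝ} (hV : ∃ Mc, 0 ≤ Mc ∧ S.FormContinuous ord V Mc) :
    0 ≤ S.ctyNorm ord V ∧ S.FormContinuous ord V (S.ctyNorm ord V) := by
  obtain ⟨Mc, hMc⟩ := hV
  refine ⟨le_csInf ⟨Mc, hMc⟩ fun _ h => h.1, fun x y v hd => ?_⟩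
  refine le_csInf_mul ⟨Mc, hMc⟩ (Finset.sum_nonneg fun β _ => ?_) fun M hM => hM.2 x y v hd
  exact mul_nonneg (Real.rpow_nonneg (pdist_nonneg _ _) _) (norm_nonneg _)

section bdNorm

variable {N : ℝ} (exps : A → ℝ)

lemma bdNorm_set_nonempty (hN0 : 0 < N)
    (hV : ∃ Mb : A → ℝ, (∀ β, 0 ≤ Mb β) ∧ S.FormBounded V Mb) :
    {M | 0 ≤ M ∧ S.FormBounded V fun β => M * N ^ exps β}.Nonempty := by
  obtain ⟨Mb, hMb0, hMb⟩ := hV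
  have hpos (β : A) : 0 < N ^ exps β := Real.rpow_pos_of_pos hN0 _
  refine ⟨∑ β : A, Mb β / N ^ exps β,
    Finset.sum_nonneg fun β _ => div_nonneg (hMb0 β) (hpos β).le, fun x v => ?_⟩
  refine (hMb x v).trans
    (Finset.sum_le_sum fun β _ => mul_le_mul_of_nonneg_right ?_ (norm_nonneg _))
  exact (div_le_iff₀ (hpos β)).1 <| Finset.single_le_sum
    (f := fun γ : A => Mb γ / N ^ exps γ)
    (fun γ _ => div_nonneg (hMb0 γ) (hpos γ).le) (Finset.mem_univ β)

lemma bdNorm_spec (hN0 : 0 < N) (hV : ∃ Mb : A → ℝ, (∀ β, 0 ≤ Mb β) ∧ S.FormBounded V Mb) :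
    0 ≤ S.bdNorm N exps V ∧ S.FormBounded V fun β => S.bdNorm N exps V * N ^ exps β := by
  have hne := S.bdNorm_set_nonempty exps hN0 hV
  have hsum (M : ℝ) (x : ℝ × ℝ) (v : ∀ γ : A, Tb γ) :
      ∑ β : A, M * N ^ exps β * ‖S.apply x β v‖ = M * ∑ β : A, N ^ exps β * ‖S.apply x β v‖ := by
    simp only [Finset.mul_sum, mul_assoc]
  refine ⟨le_csInf hne fun _ h => h.1, fun x v => ?_⟩
  rw [hsum]
  refine le_csInf_mul hne (Finset.sum_nonneg fun β _ => ?_) fun M hM => hsum M x v ▸ hM.2 x v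
  exact mul_nonneg (Real.rpow_nonneg hN0.le _) (norm_nonneg _)

lemma bdNorm_cutForm_le (hN0 : 0 < N)
    (hV : ∃ Mb : A → ℝ, (∀ β, 0 ≤ Mb β) ∧ S.FormBounded V Mb) :
    S.bdNorm N exps (S.cutForm η V) ≤ S.bdNorm N exps V :=
  csInf_le_csInf ⟨0, fun _ h => h.1⟩ (S.bdNorm_set_nonempty exps hN0 hV) fun _ hM =>
    ⟨hM.1, S.formBounded_cutForm (fun _ => mul_nonneg hM.1 (Real.rpow_nonneg hN0.le _)) hM.2⟩

lemma abs_le_bdNorm_mul_of_apply_eq_ite (hN0 : 0 < N)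
    (hV : ∃ Mb : A → ℝ, (∀ β, 0 ≤ Mb β) ∧ S.FormBounded V Mb) {p : A → Prop}
    [DecidablePred p] (hw : ∀ β, S.apply x β w = if p β then S.apply x β v else 0) :
    |V x w| ≤ S.bdNorm N exps V * ∑ β : A, if p β then N ^ exps β * ‖S.apply x β v‖ else 0 :=
  (S.abs_le_of_apply_eq_ite (S.bdNorm_spec exps hN0 hV).2 hw).trans_eq <| by
    rw [Finset.mul_sum]
    exact Finset.sum_congr rfl fun β _ => by split_ifs <;> simp [mul_assoc]

end bdNorm

def cutDefect (η : ℝ) (x y : ℝ × ℝ) (v : ∀ γ : A, Tb γ) : ℝ :=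
  ∑ γ : A, if (γ : ℝ) < η then pdist y x ^ (η - γ) * ‖S.apply x γ v‖ else 0

lemma tendsto_cutDefect (x : ℝ × ℝ) (v : ∀ γ : A, Tb γ) :
    Tendsto (fun y => S.cutDefect η x y v) (𝓝 x) (𝓝 0) := by
  have hcont : Continuous fun y => S.cutDefect η x y v := by
    refine continuous_finsetSum _ fun γ _ => ?_
    split_ifs with h
    · exact ((Real.continuous_rpow_const (sub_pos.2 h).le).comp
        (continuous_pdist_left x)).mul continuous_const
    · exact continuous_const
  have hzero : S.cutDefect η x x v = 0 := Finset.sum_eq_zero fun γ _ => by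
    split_ifs with h
    · rw [pdist_self, Real.zero_rpow (sub_pos.2 h).ne', zero_mul]
    · rfl
  simpa [hzero] using hcont.tendsto x

lemma cutDefect_le {ord : ℝ} (hord : ord ≤ η) (hd : pdist y x ≤ 1) :
    S.cutDefect η x y v ≤ ∑ β : A, pdist y x ^ max (ord - β) 0 * ‖S.apply x β v‖ :=
  Finset.sum_le_sum fun γ _ => by
    split_ifs with h
    · exact mul_le_mul_of_nonneg_right (Real.rpow_le_rpow_of_exponent_ge' (pdist_nonneg _ _)
        hd (le_max_right _ _) (max_le (by linarith) (sub_pos.2 h).le)) (norm_nonneg _)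
    · exact mul_nonneg (Real.rpow_nonneg (pdist_nonneg _ _) _) (norm_nonneg _)

lemma norm_apply_cutVec_le_cutDefect {C : ℝ} (hC0 : 0 ≤ C) (hC : S.IsSkelBound C)
    (hd : pdist y x ≤ 1) {β : A} (hβ : η ≤ (β : ℝ)) :
    ‖S.apply y β (S.cutVec x η v)‖ ≤ C * S.cutDefect η x y v := by
  have hinc := hC β (S.cutVec x η v) x y hd
  rw [S.apply_cutVec_of_le hβ, sub_zero] at hinc
  refine hinc.trans (mul_le_mul_of_nonneg_left (Finset.sum_le_sum fun γ _ => ?_) hC0)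
  rw [S.apply_cutVec]
  by_cases hγη : (γ : ℝ) < η
  · have hγβ : (γ : ℝ) < β := hγη.trans_le hβ
    simp only [hγη, hγβ, if_true]
    exact mul_le_mul_of_nonneg_right (Real.rpow_le_rpow_of_exponent_ge' (pdist_nonneg _ _)
      hd (sub_pos.2 hγη).le (by linarith)) (norm_nonneg _)
  · simp [hγη]

lemma abs_sub_cutVec_le {Mb : A → ℝ} (hMb : ∀ β, 0 ≤ Mb β) (hV : S.FormBounded V Mb)
    (hVl : IsLinearMap ℝ (V y)) {C : ℝ} (hC0 : 0 ≤ C) (hC : S.IsSkelBound C)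
    (hd : pdist y x ≤ 1) :
    |V y (S.cutVec y η v) - V y (S.cutVec x η v)| ≤
      (∑ β : A, if η ≤ (β : ℝ) then Mb β else 0) * (C * S.cutDefect η x y v) := by
  rw [← hVl.map_sub, Finset.sum_mul]
  refine (hV y _).trans (Finset.sum_le_sum fun β _ => ?_)
  rw [S.apply_sub]
  split_ifs with hβ
  · -- `Γ_β(y)` kills the cut at `y`, and what remains is a skeleton increment
    rw [S.apply_cutVec_of_le hβ, zero_sub, norm_neg]
    exact mul_le_mul_of_nonneg_left (S.norm_apply_cutVec_le_cutDefect hC0 hC hd hβ) (hMb β)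
  · rw [S.apply_cutVec_of_lt (lt_of_not_ge hβ), S.apply_cutVec_of_lt (lt_of_not_ge hβ)]
    simp

lemma continuous_cutForm (hVl : ∀ x, IsLinearMap ℝ (V x))
    (hVc : ∀ v, Continuous fun x => V x v) {Mb : A → ℝ} (hMb : ∀ β, 0 ≤ Mb β)
    (hV : S.FormBounded V Mb) {C : ℝ} (hC0 : 0 ≤ C) (hC : S.IsSkelBound C)
    (v : ∀ γ : A, Tb γ) : Continuous fun x => S.cutForm η V x v := by
  refine continuous_iff_continuousAt.2 fun x => ?_
  set w := S.cutVec x η v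
  have hnear : ∀ᶠ y in 𝓝 x, pdist y x ≤ 1 :=
    ((continuous_pdist_left x).tendsto x).eventually_le_const (by simp [pdist_self])
  have hsmall : Tendsto (fun y => V y (S.cutVec y η v) - V y w) (𝓝 x) (𝓝 0) := by
    have hdefect : Tendsto (fun y => (∑ β : A, if η ≤ (β : ℝ) then Mb β else 0) *
        (C * S.cutDefect η x y v)) (𝓝 x) (𝓝 0) := by
      simpa using ((S.tendsto_cutDefect x v).const_mul C).const_mul _
    refine squeeze_zero_norm' ?_ hdefect
    filter_upwards [hnear] with y hy
    exact S.abs_sub_cutVec_le hMb hV (hVl y) hC0 hC hy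
  have hsum := ((hVc w).tendsto x).add hsmall
  simp only [add_sub_cancel, add_zero] at hsum
  exact hsum

lemma formContinuous_cutForm (hVl : ∀ x, IsLinearMap ℝ (V x)) {ord Mc : ℝ} (hMc : 0 ≤ Mc)
    (hVc : S.FormContinuous ord V Mc) {Mb : A → ℝ} (hMb : ∀ β, 0 ≤ Mb β)
    (hV : S.FormBounded V Mb) {C : ℝ} (hC0 : 0 ≤ C) (hC : S.IsSkelBound C) :
    S.FormContinuous (min ord η) (S.cutForm η V)
      (Mc + (∑ β : A, if η ≤ (β : ℝ) then Mb β else 0) * C) := by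
  intro x y v hd
  set w := S.cutVec x η v
  set Dxy := ∑ β : A, pdist y x ^ max (min ord η - β) 0 * ‖S.apply x β v‖
  have hbase : |V y w - V x w| ≤ Mc * Dxy := by
    refine (hVc x y w hd).trans (mul_le_mul_of_nonneg_left (Finset.sum_le_sum fun β _ => ?_) hMc)
    rw [S.apply_cutVec]
    split_ifs
    · exact mul_le_mul_of_nonneg_right (Real.rpow_le_rpow_of_exponent_ge' (pdist_nonneg _ _)
        hd (le_max_right _ _) (max_le_max_right _ (by linarith [min_le_left ord η])))
        (norm_nonneg _)
    · simpa using mul_nonneg (Real.rpow_nonneg (pdist_nonneg _ _) _) (norm_nonneg _)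
  have hmove : |V y (S.cutVec y η v) - V y w| ≤
      (∑ β : A, if η ≤ (β : ℝ) then Mb β else 0) * (C * Dxy) :=
    (S.abs_sub_cutVec_le hMb hV (hVl y) hC0 hC hd).trans <| mul_le_mul_of_nonneg_left
      (mul_le_mul_of_nonneg_left (S.cutDefect_le (min_le_right ord η) hd) hC0)
      (Finset.sum_nonneg fun β _ => by split_ifs; exacts [hMb β, le_rfl])
  calc |S.cutForm η V y v - S.cutForm η V x v|
      = |(V y w - V x w) + (V y (S.cutVec y η v) - V y w)| := by
        simp only [cutForm, w]; congr 1; ring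
    _ ≤ Mc * Dxy + (∑ β : A, if η ≤ (β : ℝ) then Mb β else 0) * (C * Dxy) :=
        (abs_add_le _ _).trans (add_le_add hbase hmove)
    _ = _ := by ring

end PreSkeleton

theorem reduction_of_modelled_distributions_general
    {A : Finset ℝ} {Tb : A → Type*}
    [∀ β, NormedAddCommGroup (Tb β)] [∀ β, NormedSpace ℝ (Tb β)]
    (S : PreSkeleton A Tb) (hS : S.IsSkeleton) (hA : A.Nonempty)
    (N : ℝ) (hN0 : 0 < N) (hN1 : N ≤ 1)
    (exps : A → ℝ)
    (ord : ℝ) (V : ℝ × ℝ → (∀ γ : A, Tb γ) → ℝ) (hV : S.IsModelled ord V)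
    (η : ℝ) (hη₁ : A.min' hA < η) :
    S.IsModelled (min ord η) (S.cutForm η V) ∧
    S.bdNorm N exps (S.cutForm η V) ≤ S.bdNorm N exps V ∧
    S.ctyNorm (min ord η) (S.cutForm η V) ≤
      S.ctyNorm ord V +
        ((A.card - 1 : ℕ) : ℝ) * N ^ minExpFrom A exps η * S.skelNorm *
          S.bdNorm N exps V ∧
    (∀ κ : ℝ, η < κ → ∀ (x : ℝ × ℝ) (v : ∀ γ : A, Tb γ),
      |S.cutForm κ V x v - S.cutForm η V x v| ≤
        S.bdNorm N exps V * ∑ β : A,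
          (if η ≤ (β : ℝ) ∧ (β : ℝ) < κ
            then N ^ exps β * ‖S.apply x β v‖ else 0)) ∧
    (∀ (x : ℝ × ℝ) (v : ∀ γ : A, Tb γ),
      |V x v - S.cutForm η V x v| ≤
        S.bdNorm N exps V * ∑ β : A,
          (if η ≤ (β : ℝ) then N ^ exps β * ‖S.apply x β v‖ else 0)) := by
  obtain ⟨hVl, hVc, hVb, hVfc⟩ := hV
  obtain ⟨hC0, hC⟩ := S.skelNorm_spec hS
  obtain ⟨hM0, hMB⟩ := S.bdNorm_spec exps hN0 hVb
  obtain ⟨hMc0, hMcC⟩ := S.ctyNorm_spec hVfc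
  have hMb0 (β : A) : 0 ≤ S.bdNorm N exps V * N ^ exps β :=
    mul_nonneg hM0 (Real.rpow_nonneg hN0.le _)
  have hK0 : 0 ≤ ((A.card - 1 : ℕ) : ℝ) * N ^ minExpFrom A exps η * S.skelNorm *
      S.bdNorm N exps V :=
    mul_nonneg (mul_nonneg (mul_nonneg (Nat.cast_nonneg _) (Real.rpow_nonneg hN0.le _)) hC0) hM0
  have hlevels : (∑ β : A, if η ≤ (β : ℝ) then S.bdNorm N exps V * N ^ exps β else 0) *
      S.skelNorm ≤ ((A.card - 1 : ℕ) : ℝ) * N ^ minExpFrom A exps η * S.skelNorm *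
        S.bdNorm N exps V :=
    (mul_le_mul_of_nonneg_right (sum_ite_rpow_le hA exps hN0 hN1 hη₁ hM0) hC0).trans_eq
      (by ring)
  have hFC := (S.formContinuous_cutForm hVl hMc0 hMcC hMb0 hMB hC0 hC).mono
    (add_le_add_right hlevels (S.ctyNorm ord V))
  refine ⟨⟨S.isLinearMap_cutForm hVl, S.continuous_cutForm hVl hVc hMb0 hMB hC0 hC,
      ⟨_, hMb0, S.formBounded_cutForm hMb0 hMB⟩, ⟨_, add_nonneg hMc0 hK0, hFC⟩⟩,
    S.bdNorm_cutForm_le exps hN0 hVb,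
    csInf_le ⟨0, fun _ h => h.1⟩ ⟨add_nonneg hMc0 hK0, hFC⟩, fun κ hκ x v => ?_, fun x v => ?_⟩
  · rw [PreSkeleton.cutForm, PreSkeleton.cutForm, ← (hVl x).map_sub]
    exact S.abs_le_bdNorm_mul_of_apply_eq_ite exps hN0 hVb (S.apply_cutVec_sub_cutVec hκ)
  · rw [PreSkeleton.cutForm, ← (hVl x).map_sub]
    exact S.abs_le_bdNorm_mul_of_apply_eq_ite exps hN0 hVb S.apply_sub_cutVec

/-- **Reduction of modelled distributions.** -/
theorem reduction_of_modelled_distributions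
    {A : Finset ℝ} {Tb : A → Type*}
    [∀ β, NormedAddCommGroup (Tb β)] [∀ β, NormedSpace ℝ (Tb β)]
    (S : PreSkeleton A Tb) (hS : S.IsSkeleton) (hA : A.Nonempty)
    (N : ℝ) (hN0 : 0 < N) (hN1 : N ≤ 1)
    (exps : A → ℝ) (hexps : ∀ β, 0 ≤ exps β)
    (ord : ℝ) (V : ℝ × ℝ → (∀ γ : A, Tb γ) → ℝ) (hV : S.IsModelled ord V)
    (η : ℝ) (hη₁ : A.min' hA < η) (hη₂ : η ≤ A.max' hA) :
    S.IsModelled (min ord η) (S.cutForm η V) ∧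
    S.bdNorm N exps (S.cutForm η V) ≤ S.bdNorm N exps V ∧
    S.ctyNorm (min ord η) (S.cutForm η V) ≤
      S.ctyNorm ord V +
        ((A.card - 1 : ℕ) : ℝ) * N ^ minExpFrom A exps η * S.skelNorm *
          S.bdNorm N exps V ∧
    (∀ κ : ℝ, η < κ → ∀ (x : ℝ × ℝ) (v : ∀ γ : A, Tb γ),
      |S.cutForm κ V x v - S.cutForm η V x v| ≤
        S.bdNorm N exps V * ∑ β : A,
          (if η ≤ (β : ℝ) ∧ (β : ℝ) < κ
            then N ^ exps β * ‖S.apply x β v‖ else 0)) ∧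
    (∀ (x : ℝ × ℝ) (v : ∀ γ : A, Tb γ),
      |V x v - S.cutForm η V x v| ≤
        S.bdNorm N exps V * ∑ β : A,
          (if η ≤ (β : ℝ) then N ^ exps β * ‖S.apply x β v‖ else 0)) :=
  reduction_of_modelled_distributions_general S hS hA N hN0 hN1 exps ord V hV η hη₁
end
end

section
/- Equivalence with Hairer-type continuity: Let (A,T) be an abstract space with skeleton Γ; by the triangular structure, Γ(x) is invertible in L(T,T) for every x, with Γ⁻¹ ∈ C⁰(ℝ²;L(T,T)). Let V ∈ C⁰(ℝ²;T*) satisfy form boundedness and set Ṽ(x) := Γ^{−*}(x)V(x), so that V(x).v = Ṽ(x).(Γ(x)v). Then for any M^c ≥ 0 and any ᾱ, the following are equivalent: (i) |(V(y)−V(x)).v| ≤ M^c Σ_{β∈A} d^{(ᾱ−β)∨0}(y,x)‖Γ_β(x)v‖_{T_β} for all v ∈ T and all x,y with d(y,x) ≤ 1; (ii) ‖(Γ^{−*}(x)Γ^{*}(y)Ṽ(y) − Ṽ(x))_β‖_{T_β*} ≤ M^c d^{(ᾱ−β)∨0}(y,x) for all β ∈ A and all x,y with d(y,x) ≤ 1,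 where (·)_β denotes the component in T_β* under T* = ⊕_{β∈A} T_β*. -/
open scoped BigOperators
open MeasureTheory

noncomputable section

/-!
Substituting `v = Γ⁻¹(x)u`, condition (i) says that the functional `φ = (V(y) − V(x)) ∘ Γ⁻¹(x)`
satisfies `|φ u| ≤ ∑_β c_β ‖u_β‖` with `c_β = M^c d^{(ᾱ−β)∨0}(y,x)`. The dual of a weighted
`ℓ¹`-sum of normed spaces is the weighted `ℓ^∞`-sum of their duals, so this holds iff the
restriction of `φ` to each `T_β`, which is `(Γ^{−*}(x)V(y) − Ṽ(x))_β` because `V(x) ∘ Γ⁻¹(x) = Ṽ(x)`,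
has norm at most `c_β`: that is (ii).
-/

theorem abs_le_sum_mul_norm_iff_single {ι : Type*} [Fintype ι] [DecidableEq ι] {E : ι → Type*}
    [∀ i, SeminormedAddCommGroup (E i)] {F : Type*} [FunLike F (∀ i, E i) ℝ]
    [AddMonoidHomClass F (∀ i, E i) ℝ] (φ : F) (c : ι → ℝ) :
    (∀ u, |φ u| ≤ ∑ i, c i * ‖u i‖) ↔ ∀ i (w : E i), |φ (Pi.single i w)| ≤ c i * ‖w‖ := by
  constructor
  · intro h i w
    have hsum : ∑ j, c j * ‖(Pi.single i w : ∀ j, E j) j‖ = c i * ‖w‖ := by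
      rw [Fintype.sum_eq_single i fun j hj => by rw [Pi.single_eq_of_ne hj, norm_zero, mul_zero],
        Pi.single_eq_same]
    simpa only [hsum] using h (Pi.single i w)
  · intro h u
    calc |φ u| = |∑ i, φ (Pi.single i (u i))| := by rw [← map_sum, Finset.univ_sum_single]
      _ ≤ ∑ i, |φ (Pi.single i (u i))| := Finset.abs_sum_le_sum_abs _ _
      _ ≤ ∑ i, c i * ‖u i‖ := Finset.sum_le_sum fun i _ => h i (u i)

namespace PreSkeleton

variable {A : Finset ℝ} {Tb : A → Type*}
  [∀ β, NormedAddCommGroup (Tb β)] [∀ β, NormedSpace ℝ (Tb β)]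
  (S : PreSkeleton A Tb) {x : ℝ × ℝ} {Ginv : (∀ γ : A, Tb γ) → ∀ γ : A, Tb γ}

theorem forall_apply_iff_forall_inv (hGinv₁ : ∀ u β, S.apply x β (Ginv u) = u β)
    (hGinv₂ : ∀ v, Ginv (fun β => S.apply x β v) = v)
    (P : (∀ γ : A, Tb γ) → (∀ γ : A, Tb γ) → Prop) :
    (∀ v, P v fun β => S.apply x β v) ↔ ∀ u, P (Ginv u) u := by
  refine ⟨fun h u => ?_, fun h v => ?_⟩
  · simpa only [hGinv₁] using h (Ginv u)
  · simpa only [hGinv₂] using h fun β => S.apply x β v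

theorem apply_inv_single_eq [DecidableEq A] {V : (∀ γ : A, Tb γ) → ℝ} {W : ∀ β : A, Tb β → ℝ}
    (hGinv₁ : ∀ u β, S.apply x β (Ginv u) = u β) (hW0 : ∀ β, W β 0 = 0)
    (hW : ∀ v, V v = ∑ β : A, W β (S.apply x β v)) (β : A) (w : Tb β) :
    V (Ginv (Pi.single β w)) = W β w := by
  rw [hW, Fintype.sum_eq_single β fun γ hγ => by rw [hGinv₁, Pi.single_eq_of_ne hγ, hW0]]
  rw [hGinv₁, Pi.single_eq_same]

theorem abs_sub_le_iff_single [DecidableEq A] {V₀ V₁ : (∀ γ : A, Tb γ) → ℝ}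
    {W : ∀ β : A, Tb β → ℝ} (hV₀ : IsLinearMap ℝ V₀) (hV₁ : IsLinearMap ℝ V₁)
    (hGlin : IsLinearMap ℝ Ginv)
    (hGinv₁ : ∀ u β, S.apply x β (Ginv u) = u β)
    (hGinv₂ : ∀ v, Ginv (fun β => S.apply x β v) = v)
    (hWlin : ∀ β, IsLinearMap ℝ (W β)) (hW : ∀ v, V₀ v = ∑ β : A, W β (S.apply x β v))
    (c : A → ℝ) :
    (∀ v, |V₁ v - V₀ v| ≤ ∑ β : A, c β * ‖S.apply x β v‖) ↔
      ∀ β (w : Tb β), |V₁ (Ginv (Pi.single β w)) - W β w| ≤ c β * ‖w‖ := by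
  let φ : (∀ γ : A, Tb γ) →ₗ[ℝ] ℝ :=
    (IsLinearMap.mk' _ hV₁ - IsLinearMap.mk' _ hV₀).comp (IsLinearMap.mk' _ hGlin)
  rw [S.forall_apply_iff_forall_inv hGinv₁ hGinv₂ fun v u => |V₁ v - V₀ v| ≤ ∑ β, c β * ‖u β‖]
  refine (abs_le_sum_mul_norm_iff_single φ c).trans ?_
  simp only [φ, LinearMap.comp_apply, LinearMap.sub_apply, IsLinearMap.mk'_apply,
    S.apply_inv_single_eq hGinv₁ (fun β => (hWlin β).map_zero) hW]

end PreSkeleton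

theorem form_continuity_equivalence_general
    {A : Finset ℝ} {Tb : A → Type*}
    [∀ β, NormedAddCommGroup (Tb β)] [∀ β, NormedSpace ℝ (Tb β)]
    (S : PreSkeleton A Tb)
    (V : ℝ × ℝ → (∀ γ : A, Tb γ) → ℝ)
    (hlin : ∀ x, IsLinearMap ℝ (V x))
    -- the pointwise inverse `Γ⁻¹(x)` of the skeleton
    (Ginv : ℝ × ℝ → (∀ γ : A, Tb γ) → ∀ γ : A, Tb γ)
    (hGlin : ∀ x, IsLinearMap ℝ (Ginv x))
    (hGinv₁ : ∀ (x : ℝ × ℝ) (v : ∀ γ : A, Tb γ) (β : A),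
      S.apply x β (Ginv x v) = v β)
    (hGinv₂ : ∀ (x : ℝ × ℝ) (v : ∀ γ : A, Tb γ),
      Ginv x (fun β => S.apply x β v) = v)
    -- `Ṽ` : the components of `Γ^{−*}(x) V(x)`
    (W : ℝ × ℝ → ∀ β : A, Tb β → ℝ)
    (hWlin : ∀ x β, IsLinearMap ℝ (W x β))
    (hW : ∀ (x : ℝ × ℝ) (v : ∀ γ : A, Tb γ),
      V x v = ∑ β : A, W x β (S.apply x β v))
    (Mc : ℝ) (ord : ℝ) :
    S.FormContinuous ord V Mc ↔
      ∀ (β : A) (x y : ℝ × ℝ), pdist y x ≤ 1 → ∀ w : Tb β,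
        |V y (Ginv x (Function.update 0 β w)) - W x β w| ≤
          Mc * pdist y x ^ max (ord - (β : ℝ)) 0 * ‖w‖ := by
  have key : ∀ x y, (∀ v, |V y v - V x v| ≤
        Mc * ∑ β : A, pdist y x ^ max (ord - (β : ℝ)) 0 * ‖S.apply x β v‖) ↔
      ∀ β (w : Tb β), |V y (Ginv x (Pi.single β w)) - W x β w| ≤
        Mc * pdist y x ^ max (ord - (β : ℝ)) 0 * ‖w‖ := fun x y => by
    simp only [Finset.mul_sum, ← mul_assoc]
    exact S.abs_sub_le_iff_single (hlin x) (hlin y) (hGlin x) (hGinv₁ x) (hGinv₂ x) (hWlin x) (hW x) _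
  constructor
  · exact fun h β x y hxy => (key x y).1 (fun v => h x y v hxy) β
  · exact fun h x y v hxy => (key x y).2 (fun β => h β x y hxy) v

/-- **Equivalence with Hairer-type continuity.** -/
theorem form_continuity_equivalence
    {A : Finset ℝ} {Tb : A → Type*}
    [∀ β, NormedAddCommGroup (Tb β)] [∀ β, NormedSpace ℝ (Tb β)]
    (S : PreSkeleton A Tb) (hS : S.IsSkeleton)
    (V : ℝ × ℝ → (∀ γ : A, Tb γ) → ℝ)
    (hlin : ∀ x, IsLinearMap ℝ (V x)) (hcont : ∀ v, Continuous fun x => V x v)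
    (hbd : ∃ Mb : A → ℝ, (∀ β, 0 ≤ Mb β) ∧ S.FormBounded V Mb)
    -- the pointwise inverse `Γ⁻¹(x)` of the skeleton
    (Ginv : ℝ × ℝ → (∀ γ : A, Tb γ) → ∀ γ : A, Tb γ)
    (hGlin : ∀ x, IsLinearMap ℝ (Ginv x))
    (hGinv₁ : ∀ (x : ℝ × ℝ) (v : ∀ γ : A, Tb γ) (β : A),
      S.apply x β (Ginv x v) = v β)
    (hGinv₂ : ∀ (x : ℝ × ℝ) (v : ∀ γ : A, Tb γ),
      Ginv x (fun β => S.apply x β v) = v)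
    -- `Ṽ` : the components of `Γ^{−*}(x) V(x)`
    (W : ℝ × ℝ → ∀ β : A, Tb β → ℝ)
    (hWlin : ∀ x β, IsLinearMap ℝ (W x β))
    (hW : ∀ (x : ℝ × ℝ) (v : ∀ γ : A, Tb γ),
      V x v = ∑ β : A, W x β (S.apply x β v))
    (Mc : ℝ) (hMc : 0 ≤ Mc) (ord : ℝ) :
    S.FormContinuous ord V Mc ↔
      ∀ (β : A) (x y : ℝ × ℝ), pdist y x ≤ 1 → ∀ w : Tb β,
        |V y (Ginv x (Function.update 0 β w)) - W x β w| ≤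
          Mc * pdist y x ^ max (ord - (β : ℝ)) 0 * ‖w‖ :=
  form_continuity_equivalence_general S V hlin Ginv hGlin hGinv₁ hGinv₂ W hWlin hW Mc ord
end
end
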